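/- For real t and β, the limit P(t,β) := lim_{n→∞} (1/n) log ∑_{ω∈ℕ^n} q_n(ω)^{−2t} ∏_{i=1}^n ω_i^{−2β} (with values in ℝ ∪ {+∞}) is finite if and only if 2(t+β) > 1. -/

import Mathlib

open Filter ENNReal

/-- Denominators of the convergents: `q_n = ω_n q_{n-1} + q_{n-2}`, `q_{-1} = 0`, `q_0 = 1`. -/
def qRec (a : ℕ → ℕ) : ℕ → ℕ
  | 0 => 1
  | 1 => a 1
  | n + 2 => a (n + 2) * qRec a (n + 1) + qRec a n

/-- The continued fraction denominator `q_n(ω)` of a finite word `ω ∈ ℕ^n`. -/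
def wordQ {n : ℕ} (w : Fin n → ℕ+) : ℕ :=
  qRec (fun i => if h : 1 ≤ i ∧ i ≤ n then (w ⟨i - 1, by omega⟩ : ℕ) else 1) n

/-- The `n`-th partition function `Z_n(t,β) = ∑_{ω ∈ ℕ^n} q_n(ω)^{−2t} ∏ ω_i^{−2β}`,
valued in `[0,∞]`. -/
noncomputable def Zpart (t β : ℝ) (n : ℕ) : ℝ≥0∞ :=
  ∑' w : Fin n → ℕ+,
    ((wordQ w : ℝ≥0∞)) ^ (-2 * t) * ∏ i : Fin n, (((w i : ℕ) : ℝ≥0∞)) ^ (-2 * β)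

/-!
The one-letter partition function is `Z_1(t,β) = ∑_{k ≥ 1} k^{-2(t+β)}`, which is finite exactly
when `2(t+β) > 1`; this gives one direction. Conversely, `q_n(ω)` is the top-left entry of
`∏ [[ω_i, 1], [1, 0]]`, and multiplying these matrices shows
`q(x) q(y) ≤ q(xy) ≤ 2 q(x) q(y)` for the concatenation `xy` of two words. Summing over words,
`Z_{m+n}` and `Z_m Z_n` agree up to the factor `2^{2|t|}`. Hence `Z_n` is comparable to `Z_1^n`
(so it is finite and positive), and `log Z_n` is additive up to a bounded error, so Fekete's
lemma gives the convergence of `(1/n) log Z_n`.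
-/

theorem ENNReal.inv_le_mul_inv_of_le_mul {x y C : ℝ≥0∞} (hC₀ : C ≠ 0) (hC : C ≠ ⊤)
    (h : y ≤ C * x) : x⁻¹ ≤ C * y⁻¹ := by
  have : C⁻¹ * x⁻¹ ≤ y⁻¹ := by
    rw [← ENNReal.mul_inv (Or.inl hC₀) (Or.inl hC)]
    exact ENNReal.inv_le_inv.2 h
  calc x⁻¹ = C * (C⁻¹ * x⁻¹) := (ENNReal.mul_inv_cancel_left hC₀ hC).symm
    _ ≤ C * y⁻¹ := by gcongr

theorem ENNReal.rpow_le_rpow_abs_mul {x y C : ℝ≥0∞} (hC₀ : C ≠ 0) (hC : C ≠ ⊤)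
    (hxy : x ≤ C * y) (hyx : y ≤ C * x) (s : ℝ) : x ^ s ≤ C ^ |s| * y ^ s := by
  rcases le_total 0 s with hs | hs
  · rw [abs_of_nonneg hs, ← ENNReal.mul_rpow_of_nonneg _ _ hs]
    exact ENNReal.rpow_le_rpow hxy hs
  · have hinv := ENNReal.inv_le_mul_inv_of_le_mul hC₀ hC hyx
    have key : x⁻¹ ^ (-s) ≤ C ^ (-s) * y⁻¹ ^ (-s) := by
      rw [← ENNReal.mul_rpow_of_nonneg _ _ (neg_nonneg.2 hs)]
      exact ENNReal.rpow_le_rpow hinv (neg_nonneg.2 hs)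
    simpa [abs_of_nonpos hs, ENNReal.inv_rpow, ← ENNReal.rpow_neg] using key

theorem ENNReal.tsum_mul_tsum {α β : Type*} (f : α → ℝ≥0∞) (g : β → ℝ≥0∞) :
    (∑' a, f a) * ∑' b, g b = ∑' z : α × β, f z.1 * g z.2 := by
  rw [ENNReal.tsum_prod (f := fun a b => f a * g b), ← ENNReal.tsum_mul_right]
  simp_rw [ENNReal.tsum_mul_left]

theorem tsum_pnat_rpow_neg_ne_top_iff (x : ℝ) :
    ∑' k : ℕ+, ((k : ℕ) : ℝ≥0∞) ^ (-x) ≠ ⊤ ↔ 1 < x := by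
  have hcoe : ∀ k : ℕ+, ((k : ℕ) : ℝ≥0∞) ^ (-x) = ((((k : ℕ) : NNReal) ^ (-x) : NNReal) : ℝ≥0∞) :=
    fun k => by rw [ENNReal.coe_rpow_of_ne_zero (by exact_mod_cast k.ne_zero)]; rfl
  rw [tsum_congr hcoe, ENNReal.tsum_coe_ne_top_iff_summable, ← NNReal.summable_coe]
  simp only [NNReal.coe_rpow, NNReal.coe_natCast]
  rw [summable_pnat_iff_summable_nat (f := fun n : ℕ => (n : ℝ) ^ (-x)), Real.summable_nat_rpow]
  exact neg_lt_neg_iff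

theorem ENNReal.le_pow_of_le_mul {f : ℕ → ℝ≥0∞} {K : ℝ≥0∞} (h₀ : f 0 ≤ 1)
    (hsub : ∀ m n, f (m + n) ≤ K * (f m * f n)) (n : ℕ) : f n ≤ (K * f 1) ^ n := by
  induction n with
  | zero => simpa using h₀
  | succ n ih =>
    calc f (n + 1) ≤ K * (f n * f 1) := hsub n 1
      _ ≤ K * ((K * f 1) ^ n * f 1) := by gcongr
      _ = (K * f 1) ^ (n + 1) := by ring

theorem ENNReal.pow_le_of_mul_le {f : ℕ → ℝ≥0∞} {K : ℝ≥0∞} (h₀ : 1 ≤ f 0)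
    (hsup : ∀ m n, f m * f n ≤ K * f (m + n)) (n : ℕ) : f 1 ^ n ≤ K ^ n * f n := by
  induction n with
  | zero => simpa using h₀
  | succ n ih =>
    calc f 1 ^ (n + 1) = f 1 ^ n * f 1 := pow_succ _ _
      _ ≤ K ^ n * f n * f 1 := by gcongr
      _ ≤ K ^ n * (K * f (n + 1)) := by rw [mul_assoc]; exact mul_le_mul_right (hsup n 1) _
      _ = K ^ (n + 1) * f (n + 1) := by ring

theorem exists_tendsto_div_of_quasiAdditive {u : ℕ → ℝ} {c : ℝ}
    (hsub : ∀ m n, u (m + n) ≤ u m + u n + c) (hsup : ∀ m n, u m + u n ≤ u (m + n) + c) :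
    ∃ L, Tendsto (fun n => u n / n) atTop (nhds L) := by
  have hv : Subadditive fun n => u n + c := fun m n => by linarith [hsub m n]
  have hlin : ∀ n : ℕ, n * (u 1 - c) - c ≤ u n := by
    intro n
    induction n with
    | zero => simp only [Nat.cast_zero, zero_mul, zero_sub]; linarith [hsub 0 0]
    | succ n ih => push_cast; linarith [hsup n 1]
  have hbdd : BddBelow (Set.range fun n => (u n + c) / n) := by
    refine ⟨min (u 1 - c) 0, ?_⟩
    rintro _ ⟨n, rfl⟩
    rcases n.eq_zero_or_pos with rfl | hn
    · simp
    · have hn' : (0 : ℝ) < n := by exact_mod_cast hn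
      exact (min_le_left _ _).trans ((le_div_iff₀ hn').2 (by linarith [hlin n]))
  refine ⟨hv.lim, ?_⟩
  have h := (hv.tendsto_lim hbdd).sub (tendsto_const_div_atTop_nhds_zero_nat c)
  rw [sub_zero] at h
  exact h.congr fun n => by rw [← sub_div, add_sub_cancel_right]

theorem ENNReal.log_toReal_le_of_le_mul {a b K : ℝ≥0∞} (ha : a ≠ 0) (hb : b ≠ ⊤) (hK : K ≠ ⊤)
    (h : a ≤ K * b) : Real.log a.toReal ≤ Real.log b.toReal + Real.log K.toReal := by
  have hKb : K * b ≠ 0 := (pos_iff_ne_zero.1 ((pos_iff_ne_zero.2 ha).trans_le h))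
  have hK₀ : K ≠ 0 := left_ne_zero_of_mul hKb
  have hb₀ : b ≠ 0 := right_ne_zero_of_mul hKb
  calc Real.log a.toReal ≤ Real.log (K * b).toReal :=
        Real.log_le_log (ENNReal.toReal_pos ha (ne_top_of_le_ne_top (mul_ne_top hK hb) h))
          (ENNReal.toReal_mono (mul_ne_top hK hb) h)
    _ = Real.log b.toReal + Real.log K.toReal := by
        rw [ENNReal.toReal_mul, Real.log_mul (ENNReal.toReal_ne_zero.2 ⟨hK₀, hK⟩)
          (ENNReal.toReal_ne_zero.2 ⟨hb₀, hb⟩), add_comm]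

theorem ENNReal.exists_tendsto_log_toReal_div_of_quasiMultiplicative {f : ℕ → ℝ≥0∞} {K : ℝ≥0∞}
    (hK : K ≠ ⊤) (h₀ : ∀ n, f n ≠ 0) (htop : ∀ n, f n ≠ ⊤)
    (hsub : ∀ m n, f (m + n) ≤ K * (f m * f n)) (hsup : ∀ m n, f m * f n ≤ K * f (m + n)) :
    ∃ L, Tendsto (fun n => Real.log (f n).toReal / n) atTop (nhds L) := by
  have hlog_mul : ∀ m n,
      Real.log (f m * f n).toReal = Real.log (f m).toReal + Real.log (f n).toReal :=
    fun m n => by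
      rw [ENNReal.toReal_mul, Real.log_mul (ENNReal.toReal_ne_zero.2 ⟨h₀ m, htop m⟩)
        (ENNReal.toReal_ne_zero.2 ⟨h₀ n, htop n⟩)]
  refine exists_tendsto_div_of_quasiAdditive (c := Real.log K.toReal) (fun m n => ?_) fun m n => ?_
  · rw [← hlog_mul]
    exact ENNReal.log_toReal_le_of_le_mul (h₀ _) (mul_ne_top (htop m) (htop n)) hK (hsub m n)
  · rw [← hlog_mul]
    exact ENNReal.log_toReal_le_of_le_mul (mul_ne_zero (h₀ m) (h₀ n)) (htop _) hK (hsup m n)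

def continuantMatrix (l : List ℕ) : Matrix (Fin 2) (Fin 2) ℕ :=
  (l.map fun a => !![a, 1; 1, 0]).prod

theorem continuantMatrix_append (l m : List ℕ) :
    continuantMatrix (l ++ m) = continuantMatrix l * continuantMatrix m := by
  simp [continuantMatrix]

theorem continuantMatrix_cons_zero_zero (a : ℕ) (l : List ℕ) :
    continuantMatrix (a :: l) 0 0 = a * continuantMatrix l 0 0 + continuantMatrix l 1 0 := by
  simp [continuantMatrix, Matrix.mul_apply, Fin.sum_univ_two]

theorem continuantMatrix_cons_one_zero (a : ℕ) (l : List ℕ) :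
    continuantMatrix (a :: l) 1 0 = continuantMatrix l 0 0 := by
  simp [continuantMatrix, Matrix.mul_apply, Fin.sum_univ_two]

theorem continuantMatrix_concat_zero_zero (l : List ℕ) (a : ℕ) :
    continuantMatrix (l ++ [a]) 0 0 = continuantMatrix l 0 0 * a + continuantMatrix l 0 1 := by
  simp [continuantMatrix, Matrix.mul_apply, Fin.sum_univ_two]

theorem continuantMatrix_concat_zero_one (l : List ℕ) (a : ℕ) :
    continuantMatrix (l ++ [a]) 0 1 = continuantMatrix l 0 0 := by
  simp [continuantMatrix, Matrix.mul_apply, Fin.sum_univ_two]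

theorem continuantMatrix_one_zero_le {l : List ℕ} (hl : ∀ a ∈ l, 1 ≤ a) :
    continuantMatrix l 1 0 ≤ continuantMatrix l 0 0 := by
  cases l with
  | nil => simp [continuantMatrix]
  | cons a l =>
    rw [continuantMatrix_cons_zero_zero, continuantMatrix_cons_one_zero]
    exact le_add_right (Nat.le_mul_of_pos_left _ (hl a List.mem_cons_self))

theorem continuantMatrix_zero_one_le {l : List ℕ} (hl : ∀ a ∈ l, 1 ≤ a) :
    continuantMatrix l 0 1 ≤ continuantMatrix l 0 0 := by
  obtain rfl | ⟨l, a, rfl⟩ := l.eq_nil_or_concat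
  · simp [continuantMatrix]
  · rw [List.concat_eq_append] at hl ⊢
    rw [continuantMatrix_concat_zero_zero, continuantMatrix_concat_zero_one]
    exact le_add_right (Nat.le_mul_of_pos_right _ (hl a (by simp)))

theorem continuantMatrix_append_zero_zero_bounds {l m : List ℕ} (hl : ∀ a ∈ l, 1 ≤ a)
    (hm : ∀ a ∈ m, 1 ≤ a) :
    continuantMatrix l 0 0 * continuantMatrix m 0 0 ≤ continuantMatrix (l ++ m) 0 0 ∧
      continuantMatrix (l ++ m) 0 0 ≤ 2 * (continuantMatrix l 0 0 * continuantMatrix m 0 0) := by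
  have h := Nat.mul_le_mul (continuantMatrix_zero_one_le hl) (continuantMatrix_one_zero_le hm)
  rw [continuantMatrix_append, Matrix.mul_apply, Fin.sum_univ_two]
  constructor <;> omega

theorem qRec_eq_continuantMatrix (a : ℕ → ℕ) (n : ℕ) :
    qRec a n = continuantMatrix (List.ofFn fun i : Fin n => a (i + 1)) 0 0 := by
  suffices h : ∀ n,
      qRec a (n + 1) = continuantMatrix (List.ofFn fun i : Fin (n + 1) => a (i + 1)) 0 0 ∧
        qRec a n = continuantMatrix (List.ofFn fun i : Fin (n + 1) => a (i + 1)) 0 1 by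
    cases n with
    | zero => rfl
    | succ n => exact (h n).1
  intro n
  induction n with
  | zero => simp [qRec, continuantMatrix]
  | succ n ih =>
    rw [List.ofFn_succ_last]
    simp only [Fin.val_castSucc, Fin.val_last]
    rw [continuantMatrix_concat_zero_zero, continuantMatrix_concat_zero_one, ← ih.1, ← ih.2, qRec]
    exact ⟨by ring, rfl⟩

theorem wordQ_eq_continuantMatrix {n : ℕ} (w : Fin n → ℕ+) :
    wordQ w = continuantMatrix (List.ofFn fun i => (w i : ℕ)) 0 0 := by
  rw [wordQ, qRec_eq_continuantMatrix]
  congr 2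
  funext i
  rw [dif_pos (by omega)]
  rfl

theorem wordQ_append_bounds {m n : ℕ} (x : Fin m → ℕ+) (y : Fin n → ℕ+) :
    wordQ x * wordQ y ≤ wordQ (Fin.append x y) ∧
      wordQ (Fin.append x y) ≤ 2 * (wordQ x * wordQ y) := by
  have hpos : ∀ {k} (z : Fin k → ℕ+), ∀ a ∈ List.ofFn fun i => (z i : ℕ), 1 ≤ a := by
    intro k z a ha
    obtain ⟨i, rfl⟩ := List.mem_ofFn.1 ha
    exact (z i).pos
  have happend : (List.ofFn fun i => ((Fin.append x y i : ℕ+) : ℕ)) =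
      (List.ofFn fun i => (x i : ℕ)) ++ List.ofFn fun i => (y i : ℕ) := by
    rw [← List.ofFn_fin_append]
    congr 1
    funext i
    refine Fin.addCases (fun j => ?_) (fun j => ?_) i <;> simp
  simp only [wordQ_eq_continuantMatrix, happend]
  exact continuantMatrix_append_zero_zero_bounds (hpos x) (hpos y)

noncomputable def wordWeight (t β : ℝ) {n : ℕ} (w : Fin n → ℕ+) : ℝ≥0∞ :=
  (wordQ w : ℝ≥0∞) ^ (-2 * t) * ∏ i, ((w i : ℕ) : ℝ≥0∞) ^ (-2 * β)

theorem wordWeight_append_bounds (t β : ℝ) {m n : ℕ} (x : Fin m → ℕ+) (y : Fin n → ℕ+) :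
    wordWeight t β (Fin.append x y) ≤ 2 ^ (2 * |t|) * (wordWeight t β x * wordWeight t β y) ∧
      wordWeight t β x * wordWeight t β y ≤ 2 ^ (2 * |t|) * wordWeight t β (Fin.append x y) := by
  obtain ⟨hlow, hup⟩ := wordQ_append_bounds x y
  have hQP : (wordQ (Fin.append x y) : ℝ≥0∞) ≤ 2 * (wordQ x * wordQ y : ℕ) := by
    exact_mod_cast hup
  have hPQ : ((wordQ x * wordQ y : ℕ) : ℝ≥0∞) ≤ 2 * wordQ (Fin.append x y) := by
    exact_mod_cast hlow.trans (Nat.le_mul_of_pos_left _ two_pos)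
  have habs : |-2 * t| = 2 * |t| := by rw [abs_mul]; norm_num
  have hsplit : ((wordQ x * wordQ y : ℕ) : ℝ≥0∞) ^ (-2 * t) =
      (wordQ x : ℝ≥0∞) ^ (-2 * t) * (wordQ y : ℝ≥0∞) ^ (-2 * t) := by
    push_cast
    exact ENNReal.mul_rpow_of_ne_top (natCast_ne_top _) (natCast_ne_top _) _
  have hprod : ∏ i, (((Fin.append x y i : ℕ+) : ℕ) : ℝ≥0∞) ^ (-2 * β) =
      (∏ i, ((x i : ℕ) : ℝ≥0∞) ^ (-2 * β)) * ∏ i, ((y i : ℕ) : ℝ≥0∞) ^ (-2 * β) := by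
    simp [Fin.prod_univ_add]
  have h₁ := ENNReal.rpow_le_rpow_abs_mul two_ne_zero ofNat_ne_top hQP hPQ (-2 * t)
  have h₂ := ENNReal.rpow_le_rpow_abs_mul two_ne_zero ofNat_ne_top hPQ hQP (-2 * t)
  rw [habs, hsplit] at h₁ h₂
  simp only [wordWeight, hprod]
  constructor
  · exact (mul_le_mul_left h₁ _).trans_eq (by ring)
  · calc _ = (wordQ x : ℝ≥0∞) ^ (-2 * t) * (wordQ y : ℝ≥0∞) ^ (-2 * t) *
          ((∏ i, ((x i : ℕ) : ℝ≥0∞) ^ (-2 * β)) * ∏ i, ((y i : ℕ) : ℝ≥0∞) ^ (-2 * β)) := by ring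
      _ ≤ _ := (mul_le_mul_left h₂ _).trans_eq (by ring)

theorem Zpart_eq_tsum_wordWeight (t β : ℝ) (n : ℕ) :
    Zpart t β n = ∑' w : Fin n → ℕ+, wordWeight t β w := rfl

theorem Zpart_add_eq_tsum (t β : ℝ) (m n : ℕ) :
    Zpart t β (m + n) = ∑' z : (Fin m → ℕ+) × (Fin n → ℕ+), wordWeight t β (Fin.append z.1 z.2) :=
  ((Fin.appendEquiv m n).tsum_eq (wordWeight t β)).symm

theorem Zpart_mul_eq_tsum (t β : ℝ) (m n : ℕ) :
    Zpart t β m * Zpart t β n =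
      ∑' z : (Fin m → ℕ+) × (Fin n → ℕ+), wordWeight t β z.1 * wordWeight t β z.2 :=
  ENNReal.tsum_mul_tsum _ _

theorem Zpart_add_bounds (t β : ℝ) (m n : ℕ) :
    Zpart t β (m + n) ≤ 2 ^ (2 * |t|) * (Zpart t β m * Zpart t β n) ∧
      Zpart t β m * Zpart t β n ≤ 2 ^ (2 * |t|) * Zpart t β (m + n) := by
  rw [Zpart_add_eq_tsum, Zpart_mul_eq_tsum, ← ENNReal.tsum_mul_left, ← ENNReal.tsum_mul_left]
  exact ⟨ENNReal.tsum_le_tsum fun z => (wordWeight_append_bounds t β z.1 z.2).1,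
    ENNReal.tsum_le_tsum fun z => (wordWeight_append_bounds t β z.1 z.2).2⟩

theorem Zpart_zero (t β : ℝ) : Zpart t β 0 = 1 := by
  simp [Zpart, wordQ, qRec]

theorem Zpart_one (t β : ℝ) : Zpart t β 1 = ∑' k : ℕ+, ((k : ℕ) : ℝ≥0∞) ^ (-(2 * (t + β))) := by
  rw [Zpart_eq_tsum_wordWeight, ← (Equiv.funUnique (Fin 1) ℕ+).symm.tsum_eq]
  refine tsum_congr fun k => ?_
  have hk : ((k : ℕ) : ℝ≥0∞) ≠ 0 := by exact_mod_cast k.ne_zero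
  have hq : wordQ ((Equiv.funUnique (Fin 1) ℕ+).symm k) = k := rfl
  rw [wordWeight, hq, Fin.prod_univ_one]
  simp only [Equiv.funUnique_symm_apply, uniqueElim_const]
  rw [← ENNReal.rpow_add _ _ hk (natCast_ne_top _)]
  congr 2
  ring

theorem one_le_Zpart_one (t β : ℝ) : 1 ≤ Zpart t β 1 := by
  rw [Zpart_one]
  simpa using ENNReal.le_tsum (f := fun k : ℕ+ => ((k : ℕ) : ℝ≥0∞) ^ (-(2 * (t + β)))) 1

/-- The arithmetic-geometric pressure `P(t,β)` is finite iff `2(t+β) > 1`: the partition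
functions are finite and `(1/n) log Z_n` converges to a real limit iff `2(t+β) > 1`. -/
theorem pressure_finite_iff (t β : ℝ) :
    ((∀ n, 1 ≤ n → Zpart t β n ≠ ⊤) ∧
        ∃ L : ℝ, Tendsto (fun n : ℕ => Real.log (Zpart t β n).toReal / n) atTop (nhds L))
      ↔ 1 < 2 * (t + β) := by
  rw [← tsum_pnat_rpow_neg_ne_top_iff, ← Zpart_one]
  refine ⟨fun ⟨hfin, _⟩ => hfin 1 le_rfl, fun h₁ => ?_⟩
  have hK : (2 : ℝ≥0∞) ^ (2 * |t|) ≠ ⊤ := rpow_ne_top_of_nonneg (by positivity) ofNat_ne_top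
  have hsub m n := (Zpart_add_bounds t β m n).1
  have hsup m n := (Zpart_add_bounds t β m n).2
  have htop n : Zpart t β n ≠ ⊤ :=
    ne_top_of_le_ne_top (pow_ne_top (mul_ne_top hK h₁))
      (ENNReal.le_pow_of_le_mul (Zpart_zero t β).le hsub n)
  have h₀ n : Zpart t β n ≠ 0 := by
    intro hn
    have := ENNReal.pow_le_of_mul_le (Zpart_zero t β).ge hsup n
    rw [hn, mul_zero, nonpos_iff_eq_zero] at this
    exact pow_ne_zero n (one_pos.trans_le (one_le_Zpart_one t β)).ne' this
  exact ⟨fun n _ => htop n,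
    ENNReal.exists_tendsto_log_toReal_div_of_quasiMultiplicative hK h₀ htop hsub hsup⟩
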